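/- Let L_1, ..., L_n > 0 with ∑ e^{-L_i} = 1 and suppose all ratios L_i/L_j are rational, so L_i = m_i d for a common d > 0 and positive integers m_i. Then the sequence a_k = Q̃'(k d) (where Q̃'(x) = Q̃(x) + 1/(n-1)) satisfies, for kd ≥ max_i L_i, the linear recurrence a_k = a_{k - m_1} + ... + a_{k - m_n}, whose characteristic polynomial z^{M} - ∑_i z^{M - m_i} (M = max m_i) has e^{d} as a root. -/

import Mathlib

noncomputable def Qt {n : ℕ} (L : Fin n → ℝ) (x : ℝ) : ℝ :=
  ∑' k : Fin n → ℕ, if ∑ i, L i * k i ≤ x then (Nat.multinomial Finset.univ k : ℝ) else 0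

noncomputable def Qt' {n : ℕ} (L : Fin n → ℝ) (x : ℝ) : ℝ :=
  Qt L x + 1 / ((n : ℝ) - 1)

/-! Pascal's rule `M(k) = ∑_{i, k_i ≠ 0} M(k - e_i)` for `k ≠ 0`, summed over `{k | L·k ≤ x}` and
reindexed by `k = k' + e_i`, gives `Q̃(x) = 1 + ∑ i, Q̃(x - L_i)` for `x ≥ 0`, the `1` being the term
`k = 0`. Shifting by `c = 1/(n-1)` absorbs that constant because `n c - 1 = c`; at `x = k d` this is the
recurrence. Multiplying `∑ i, e^{-m_i d} = 1` by `e^{M d}` gives the characteristic equation. -/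

open Finset
open scoped Nat

theorem Nat.succ_mul_multinomial_add_single {ι : Type*} [Fintype ι] [DecidableEq ι]
    (k : ι → ℕ) (i : ι) :
    (k i + 1) * Nat.multinomial univ (k + Pi.single i 1) =
      (∑ j, k j + 1) * Nat.multinomial univ k := by
  set k' : ι → ℕ := k + Pi.single i 1
  have hk' : k' = Function.update k i (k i + 1) := by
    ext j; by_cases h : j = i <;> simp [k', h]
  have hprod : ∏ j, (k' j)! = (k i + 1) * ∏ j, (k j)! := by
    simp only [hk', Function.apply_update (fun _ => Nat.factorial)]
    rw [prod_update_of_mem (mem_univ i), prod_eq_mul_prod_sdiff_singleton_of_mem (mem_univ i),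
      Nat.factorial_succ]
    ring
  have hsum : ∑ j, k' j = ∑ j, k j + 1 := by
    simp [k', sum_add_distrib]
  have hfact : 0 < ∏ j, (k j)! := prod_pos fun j _ => (k j).factorial_pos
  apply Nat.eq_of_mul_eq_mul_left hfact
  calc (∏ j, (k j)!) * ((k i + 1) * Nat.multinomial univ k')
      = (∏ j, (k' j)!) * Nat.multinomial univ k' := by rw [hprod]; ring
    _ = (∑ j, k j + 1) * ((∏ j, (k j)!) * Nat.multinomial univ k) := by
        rw [Nat.multinomial_spec, hsum, Nat.factorial_succ, Nat.multinomial_spec]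
    _ = _ := by ring

theorem Nat.multinomial_eq_sum_sub_single {ι : Type*} [Fintype ι] [DecidableEq ι]
    (k : ι → ℕ) (hk : k ≠ 0) :
    Nat.multinomial univ k =
      ∑ i, if k i = 0 then 0 else Nat.multinomial univ (k - Pi.single i 1) := by
  have hpos : 0 < ∑ j, k j := by
    obtain ⟨i, hi⟩ := Function.ne_iff.mp hk
    exact sum_pos' (fun j _ => Nat.zero_le _) ⟨i, mem_univ i, Nat.pos_of_ne_zero hi⟩
  apply Nat.eq_of_mul_eq_mul_left hpos
  rw [sum_mul, mul_sum]
  refine sum_congr rfl fun i _ => ?_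
  split_ifs with hi
  · simp [hi]
  · set k' : ι → ℕ := k - Pi.single i 1
    have hk' : k' + Pi.single i 1 = k := by
      refine tsub_add_cancel_of_le fun j => ?_
      by_cases h : j = i <;> simp [h]; omega
    have hsum : ∑ j, k' j + 1 = ∑ j, k j := by
      simp [← hk', sum_add_distrib]
    have := Nat.succ_mul_multinomial_add_single k' i
    have hi' : k' i + 1 = k i := by simpa using congrFun hk' i
    rw [hk', hsum, hi'] at this
    exact this

theorem finite_setOf_sum_mul_le {ι : Type*} [Fintype ι] {L : ι → ℝ} (hL : ∀ i, 0 < L i)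
    (x : ℝ) : {k : ι → ℕ | ∑ i, L i * k i ≤ x}.Finite := by
  refine (Set.Finite.pi fun i => Set.finite_Iic ⌊x / L i⌋₊).subset fun k hk i _ => ?_
  refine Nat.le_floor ((le_div_iff₀ (hL i)).mpr ?_)
  calc (k i : ℝ) * L i = L i * k i := mul_comm _ _
    _ ≤ ∑ j, L j * k j :=
        single_le_sum (fun j _ => mul_nonneg (hL j).le (Nat.cast_nonneg _)) (mem_univ i)
    _ ≤ x := hk

theorem summable_of_support_subset_setOf_sum_mul_le {ι : Type*} [Fintype ι] {L : ι → ℝ}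
    (hL : ∀ i, 0 < L i) {x : ℝ} {f : (ι → ℕ) → ℝ}
    (hf : Function.support f ⊆ {k | ∑ i, L i * k i ≤ x}) : Summable f :=
  summable_of_hasFiniteSupport ((finite_setOf_sum_mul_le hL x).subset hf)

theorem Qt_eq_one_add_sum_Qt_sub {n : ℕ} {L : Fin n → ℝ} (hL : ∀ i, 0 < L i) {x : ℝ}
    (hx : 0 ≤ x) : Qt L x = 1 + ∑ i, Qt L (x - L i) := by
  set f : (Fin n → ℕ) → ℝ := fun k =>
    if ∑ i, L i * k i ≤ x then (Nat.multinomial univ k : ℝ) else 0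
  set g : Fin n → (Fin n → ℕ) → ℝ := fun i k =>
    if k i ≠ 0 ∧ ∑ j, L j * k j ≤ x then (Nat.multinomial univ (k - Pi.single i 1) : ℝ) else 0
  have hf : Summable f := summable_of_support_subset_setOf_sum_mul_le hL fun k hk => by
    by_contra h; exact hk (if_neg h)
  have hg : ∀ i, Summable (g i) := fun i => summable_of_support_subset_setOf_sum_mul_le hL
    fun k hk => by by_contra h; exact hk (if_neg fun h' => h h'.2)
  have hf0 : f 0 = 1 := by simp [f, hx, Nat.multinomial]
  have hfg : ∀ k, (if k = 0 then 0 else f k) = ∑ i, g i k := by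
    intro k
    split_ifs with hk
    · simp [g, hk]
    · simp only [f, g, Nat.multinomial_eq_sum_sub_single k hk]
      split_ifs with hkx <;> simp [hkx]
  have hgshift : ∀ i, ∑' k, g i k = Qt L (x - L i) := by
    intro i
    rw [← (add_left_injective (Pi.single i 1 : Fin n → ℕ)).tsum_eq]
    · refine tsum_congr fun k => ?_
      simp [g, mul_add, sum_add_distrib, Pi.single_apply, le_sub_iff_add_le]
    · intro k hk
      refine ⟨k - Pi.single i 1, tsub_add_cancel_of_le fun j => ?_⟩
      have hki : k i ≠ 0 := by by_contra h; exact hk (by simp [g, h])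
      by_cases h : j = i <;> simp [h]; omega
  calc Qt L x = f 0 + ∑' k, if k = 0 then 0 else f k := hf.tsum_eq_add_tsum_ite 0
    _ = 1 + ∑ i, Qt L (x - L i) := by
      rw [hf0, tsum_congr hfg, Summable.tsum_finsetSum fun i _ => hg i]
      simp only [hgshift]

theorem Qt'_eq_sum_Qt'_sub {n : ℕ} (hn : n ≠ 1) {L : Fin n → ℝ} (hL : ∀ i, 0 < L i) {x : ℝ}
    (hx : 0 ≤ x) : Qt' L x = ∑ i, Qt' L (x - L i) := by
  have hn' : (n : ℝ) - 1 ≠ 0 := sub_ne_zero.mpr (by exact_mod_cast hn)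
  simp only [Qt', sum_add_distrib, sum_const, card_univ, Fintype.card_fin, nsmul_eq_mul,
    Qt_eq_one_add_sum_Qt_sub hL hx]
  field_simp
  ring

theorem pow_eq_sum_pow_sub_of_sum_inv_pow_eq_one {K ι : Type*} [DivisionRing K] {s : Finset ι}
    {r : K} (hr : r ≠ 0) {m : ι → ℕ} {M : ℕ} (hm : ∀ i ∈ s, m i ≤ M)
    (hsum : ∑ i ∈ s, (r ^ m i)⁻¹ = 1) : r ^ M = ∑ i ∈ s, r ^ (M - m i) := by
  rw [sum_congr rfl fun i hi => pow_sub₀ r hr (hm i hi), ← mul_sum, hsum, mul_one]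

theorem stmt13_general (n : ℕ) (hn : 1 < n) (L : Fin n → ℝ) (hL : ∀ i, 0 < L i)
    (hnorm : ∑ i, Real.exp (-L i) = 1)
    (d : ℝ) (hd : 0 < d) (m : Fin n → ℕ)
    (hcomm : ∀ i, L i = m i * d)
    (a : ℕ → ℝ) (ha : ∀ k : ℕ, a k = Qt' L (k * d))
    (M : ℕ) (hM : M = Finset.univ.sup m) :
    (∀ k : ℕ, (∀ i, (m i : ℝ) * d ≤ k * d) → a k = ∑ i, a (k - m i)) ∧
      Real.exp d ^ M = ∑ i, Real.exp d ^ (M - m i) := by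
  constructor
  · intro k hk
    have hmk : ∀ i, m i ≤ k := fun i => by exact_mod_cast le_of_mul_le_mul_right (hk i) hd
    rw [ha, Qt'_eq_sum_Qt'_sub hn.ne' hL (by positivity)]
    refine sum_congr rfl fun i _ => ?_
    rw [ha, Nat.cast_sub (hmk i), hcomm, sub_mul]
  · refine pow_eq_sum_pow_sub_of_sum_inv_pow_eq_one (Real.exp_ne_zero d)
      (fun i _ => hM ▸ le_sup (mem_univ i)) ?_
    simpa [hcomm, ← Real.exp_nat_mul, Real.exp_neg] using hnorm

theorem stmt13 (n : ℕ) (hn : 1 < n) (L : Fin n → ℝ) (hL : ∀ i, 0 < L i)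
    (hnorm : ∑ i, Real.exp (-L i) = 1)
    (d : ℝ) (hd : 0 < d) (m : Fin n → ℕ) (hm : ∀ i, 0 < m i)
    (hcomm : ∀ i, L i = m i * d)
    (a : ℕ → ℝ) (ha : ∀ k : ℕ, a k = Qt' L (k * d))
    (M : ℕ) (hM : M = Finset.univ.sup m) :
    (∀ k : ℕ, (∀ i, (m i : ℝ) * d ≤ k * d) → a k = ∑ i, a (k - m i)) ∧
      Real.exp d ^ M = ∑ i, Real.exp d ^ (M - m i) :=
  stmt13_general n hn L hL hnorm d hd m hcomm a ha M hM
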